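/- Let t(n) denote the number of λυ-terms of size n and s(n) the number of explicit substitutions of size n, where sizes are defined by: an index 'n' has size n+1, abstraction and application add 1, closure a[s] has size 1+|a|+|s|, slash a/ has size 1+|a|, lift ⇑(s) has size 1+|s|, shift ↑ has size 1. Then t(0)=0 and for n ≥ 1, t(n) equals the n-th Catalan number C(n) = (1/(n+1))·binom(2n,n). -/

import Mathlib

/-!
Splitting off the outermost constructor, a term of size `n + 1` is an index, an abstraction,
an application or a closure, and a substitution of size `n + 1` is a slash, a lift, or `↑`
(only for `n = 0`). This gives convolution recurrences for `t` and `s`. In terms of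
`c n = t n + [n = 0]` and `s n = ∑ k < n, c k` the recurrence for `t` turns into Segner's
recurrence `c (n + 1) = ∑ i + j = n, c i * c j`, by the identity
`∑ i + j = n, c i * ∑ k < j, c k + 1 = ∑ k ≤ n, c k` for the Catalan numbers.
-/

open Finset Filter

mutual
inductive Tm : Type
  | idx : Nat → Tm
  | lam : Tm → Tm
  | app : Tm → Tm → Tm
  | clos : Tm → Subst → Tm
inductive Subst : Type
  | slash : Tm → Subst
  | lift : Subst → Subst
  | shift : Subst
end

mutual
def Tm.size : Tm → Nat
  | .idx n => n + 1
  | .lam a => Tm.size a + 1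
  | .app a b => Tm.size a + Tm.size b + 1
  | .clos a s => Tm.size a + Subst.size s + 1
def Subst.size : Subst → Nat
  | .slash a => Tm.size a + 1
  | .lift s => Subst.size s + 1
  | .shift => 1
end

noncomputable def tcount (n : ℕ) : ℕ := Nat.card {a : Tm // Tm.size a = n}

noncomputable def scount (n : ℕ) : ℕ := Nat.card {s : Subst // Subst.size s = n}

open Finset.Nat

section WeightedPairs

variable {α β : Type*} (f : α → ℕ) (g : β → ℕ)

def prodFiberEquiv (n : ℕ) :
    {x : α × β // f x.1 + g x.2 = n} ≃
      Σ p : antidiagonal n, {a // f a = p.1.1} × {b // g b = p.1.2} where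
  toFun x := ⟨⟨(f x.1.1, g x.1.2), mem_antidiagonal.2 x.2⟩, ⟨x.1.1, rfl⟩, ⟨x.1.2, rfl⟩⟩
  invFun y := ⟨(y.2.1, y.2.2), by rw [y.2.1.2, y.2.2.2]; exact mem_antidiagonal.1 y.1.2⟩
  left_inv _ := rfl
  right_inv := by
    rintro ⟨⟨⟨i, j⟩, hij⟩, ⟨a, ha⟩, ⟨b, hb⟩⟩
    dsimp only at ha hb
    subst ha hb
    rfl

theorem finite_prodFiber {n : ℕ} (hf : ∀ i ≤ n, Finite {a // f a = i})
    (hg : ∀ j ≤ n, Finite {b // g b = j}) : Finite {x : α × β // f x.1 + g x.2 = n} := by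
  have (p : antidiagonal n) : Finite ({a // f a = p.1.1} × {b // g b = p.1.2}) := by
    have hp := mem_antidiagonal.1 p.2
    have := hf p.1.1 (by omega)
    have := hg p.1.2 (by omega)
    infer_instance
  exact .of_equiv _ (prodFiberEquiv f g n).symm

theorem card_prodFiber [∀ i, Finite {a // f a = i}] [∀ j, Finite {b // g b = j}] (n : ℕ) :
    Nat.card {x : α × β // f x.1 + g x.2 = n} =
      ∑ p ∈ antidiagonal n, Nat.card {a // f a = p.1} * Nat.card {b // g b = p.2} := by
  rw [Nat.card_congr (prodFiberEquiv f g n), Nat.card_sigma]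
  simp only [Nat.card_prod]
  exact sum_coe_sort (antidiagonal n) fun p => Nat.card {a // f a = p.1} * Nat.card {b // g b = p.2}

end WeightedPairs

instance : IsEmpty {a : Tm // a.size = 0} :=
  ⟨fun ⟨a, h⟩ => by cases a <;> simp [Tm.size] at h⟩

instance : IsEmpty {s : Subst // s.size = 0} :=
  ⟨fun ⟨s, h⟩ => by cases s <;> simp [Subst.size] at h⟩

def Tm.sizeSuccEquiv (n : ℕ) :
    {a : Tm // a.size = n + 1} ≃
      Unit ⊕ {a : Tm // a.size = n} ⊕ {x : Tm × Tm // x.1.size + x.2.size = n} ⊕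
        {x : Tm × Subst // x.1.size + x.2.size = n} where
  toFun
    | ⟨.idx _, _⟩ => .inl ()
    | ⟨.lam a, h⟩ => .inr (.inl ⟨a, by simpa [Tm.size] using h⟩)
    | ⟨.app a b, h⟩ => .inr (.inr (.inl ⟨(a, b), by simpa [Tm.size] using h⟩))
    | ⟨.clos a s, h⟩ => .inr (.inr (.inr ⟨(a, s), by simpa [Tm.size] using h⟩))
  invFun
    | .inl () => ⟨.idx n, rfl⟩
    | .inr (.inl a) => ⟨.lam a, by simp [Tm.size, a.2]⟩
    | .inr (.inr (.inl x)) => ⟨.app x.1.1 x.1.2, by simp [Tm.size, x.2]⟩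
    | .inr (.inr (.inr x)) => ⟨.clos x.1.1 x.1.2, by simp [Tm.size, x.2]⟩
  left_inv := by
    rintro ⟨a | a | ⟨a, b⟩ | ⟨a, s⟩, h⟩
    all_goals simp only [Tm.size, Nat.add_right_cancel_iff] at h
    · subst h; rfl
    all_goals rfl
  right_inv := by
    rintro (⟨⟩ | a | x | x) <;> rfl

def Subst.sizeSuccEquiv (n : ℕ) :
    {s : Subst // s.size = n + 1} ≃
      {a : Tm // a.size = n} ⊕ {s : Subst // s.size = n} ⊕ PLift (n = 0) where
  toFun
    | ⟨.slash a, h⟩ => .inl ⟨a, by simpa [Subst.size] using h⟩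
    | ⟨.lift s, h⟩ => .inr (.inl ⟨s, by simpa [Subst.size] using h⟩)
    | ⟨.shift, h⟩ => .inr (.inr ⟨by simpa [Subst.size, eq_comm] using h⟩)
  invFun
    | .inl a => ⟨.slash a, by simp [Subst.size, a.2]⟩
    | .inr (.inl s) => ⟨.lift s, by simp [Subst.size, s.2]⟩
    | .inr (.inr h) => ⟨.shift, by simp [Subst.size, h.down]⟩
  left_inv := by
    rintro ⟨a | s | _, h⟩ <;> rfl
  right_inv := by
    rintro (a | s | h) <;> rfl

theorem finite_size (n : ℕ) :
    Finite {a : Tm // a.size = n} ∧ Finite {s : Subst // s.size = n} := by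
  induction n using Nat.strong_induction_on with
  | _ n ih =>
    cases n with
    | zero => exact ⟨inferInstance, inferInstance⟩
    | succ n =>
      have hT (i : ℕ) (hi : i ≤ n) := (ih i (by omega)).1
      have hS (i : ℕ) (hi : i ≤ n) := (ih i (by omega)).2
      have := hT n le_rfl
      have := hS n le_rfl
      have := finite_prodFiber Tm.size Tm.size hT hT
      have := finite_prodFiber Tm.size Subst.size hT hS
      exact ⟨.of_equiv _ (Tm.sizeSuccEquiv n).symm, .of_equiv _ (Subst.sizeSuccEquiv n).symm⟩

instance (n : ℕ) : Finite {a : Tm // a.size = n} := (finite_size n).1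

instance (n : ℕ) : Finite {s : Subst // s.size = n} := (finite_size n).2

theorem tcount_zero : tcount 0 = 0 :=
  Nat.card_of_isEmpty

theorem scount_zero : scount 0 = 0 :=
  Nat.card_of_isEmpty

theorem tcount_succ (n : ℕ) :
    tcount (n + 1) = 1 + tcount n + ∑ p ∈ antidiagonal n, tcount p.1 * tcount p.2 +
      ∑ p ∈ antidiagonal n, tcount p.1 * scount p.2 := by
  have := finite_prodFiber Tm.size Tm.size (n := n) (fun _ _ => inferInstance)
    (fun _ _ => inferInstance)
  have := finite_prodFiber Tm.size Subst.size (n := n) (fun _ _ => inferInstance)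
    (fun _ _ => inferInstance)
  rw [tcount, Nat.card_congr (Tm.sizeSuccEquiv n), Nat.card_sum, Nat.card_sum, Nat.card_sum,
    card_prodFiber, card_prodFiber, Nat.card_unique]
  simp only [tcount, scount, add_assoc]

theorem scount_succ (n : ℕ) :
    scount (n + 1) = tcount n + scount n + if n = 0 then 1 else 0 := by
  rw [scount, Nat.card_congr (Subst.sizeSuccEquiv n), Nat.card_sum, Nat.card_sum]
  by_cases h : n = 0 <;> simp [h, tcount, scount]

theorem sum_antidiagonal_catalan_mul_sum_range (n : ℕ) :
    ∑ p ∈ antidiagonal n, catalan p.1 * ∑ k ∈ range p.2, catalan k + 1 =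
      ∑ k ∈ range (n + 1), catalan k := by
  induction n with
  | zero => simp
  | succ n ih =>
    have step (j : ℕ) : ∑ k ∈ range (j + 1), catalan k = ∑ k ∈ range j, catalan k + catalan j :=
      sum_range_succ _ j
    rw [sum_antidiagonal_succ', range_zero, sum_empty, mul_zero, zero_add, step (n + 1)]
    simp only [step, mul_add, sum_add_distrib, ← catalan_succ'] at ih ⊢
    omega

theorem sum_antidiagonal_ite_zero_mul (u : ℕ → ℕ) (n : ℕ) :
    ∑ p ∈ antidiagonal n, (if p.1 = 0 then 1 else 0) * u p.2 = u n := by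
  rw [sum_antidiagonal_eq_sum_range_succ_mk]
  simp

theorem sum_antidiagonal_mul_ite_zero (u : ℕ → ℕ) (n : ℕ) :
    ∑ p ∈ antidiagonal n, u p.1 * (if p.2 = 0 then 1 else 0) = u n := by
  rw [← sum_antidiagonal_swap]
  simpa [mul_comm] using sum_antidiagonal_ite_zero_mul u n

theorem catalan_of_recurrence (t s : ℕ → ℕ) (ht₀ : t 0 = 0) (hs₀ : s 0 = 0)
    (ht : ∀ n, t (n + 1) = 1 + t n + ∑ p ∈ antidiagonal n, t p.1 * t p.2 +
      ∑ p ∈ antidiagonal n, t p.1 * s p.2)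
    (hs : ∀ n, s (n + 1) = t n + s n + if n = 0 then 1 else 0) (n : ℕ) :
    t n + (if n = 0 then 1 else 0) = catalan n ∧ s n = ∑ k ∈ range n, catalan k := by
  induction n using Nat.strong_induction_on with
  | _ n ih =>
    cases n with
    | zero => simp [ht₀, hs₀]
    | succ n =>
      have hc (i : ℕ) (hi : i ≤ n) : catalan i = t i + if i = 0 then 1 else 0 :=
        ((ih i (by omega)).1).symm
      have hS (j : ℕ) (hj : j ≤ n) : ∑ k ∈ range j, catalan k = s j := ((ih j (by omega)).2).symm
      have hcc : catalan (n + 1) =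
          ∑ p ∈ antidiagonal n, t p.1 * t p.2 + t n + t n + if n = 0 then 1 else 0 := by
        rw [catalan_succ', sum_congr rfl fun p hp => by
          have hp := mem_antidiagonal.1 hp
          rw [hc p.1 (by omega), hc p.2 (by omega)]]
        simp only [add_mul, mul_add, sum_add_distrib, sum_antidiagonal_mul_ite_zero,
          sum_antidiagonal_ite_zero_mul,
          sum_antidiagonal_ite_zero_mul fun j => if j = 0 then 1 else 0]
        ring
      have hcs : ∑ p ∈ antidiagonal n, catalan p.1 * ∑ k ∈ range p.2, catalan k =
          ∑ p ∈ antidiagonal n, t p.1 * s p.2 + s n := by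
        rw [sum_congr rfl fun p hp => by
          have hp := mem_antidiagonal.1 hp
          rw [hc p.1 (by omega), hS p.2 (by omega)]]
        simp only [add_mul, sum_add_distrib, sum_antidiagonal_ite_zero_mul]
      have key := sum_antidiagonal_catalan_mul_sum_range n
      rw [sum_range_succ] at key
      have hsn := hS n le_rfl
      have hcn := hc n le_rfl
      refine ⟨?_, ?_⟩
      · rw [ht, if_neg n.succ_ne_zero, add_zero]
        omega
      · rw [hs, sum_range_succ, ← hsn, hcn]
        ring

/-- t(0)=0 and for n ≥ 1, t(n) is the n-th Catalan number binom(2n,n)/(n+1). -/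
theorem stmt0 :
    tcount 0 = 0 ∧ ∀ n : ℕ, 1 ≤ n → tcount n = (Nat.choose (2 * n) n) / (n + 1) := by
  refine ⟨tcount_zero, fun n hn => ?_⟩
  have h :=
    (catalan_of_recurrence tcount scount tcount_zero scount_zero tcount_succ scount_succ n).1
  rw [if_neg (by omega), add_zero] at h
  rw [h, catalan_eq_centralBinom_div, Nat.centralBinom_eq_two_mul_choose]
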